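/- arXiv:2304.11495 — 3 statements merged into one kernel-verified Lean document; each statement's English description precedes it below -/
import Mathlib

section
/- Let A, B be finite nonempty subsets of an abelian group G. Then |A + A| ≤ |A + B|⁴ / (|A| · |B|²). -/
open scoped Pointwise in
/-- Plünnecke–Ruzsa type inequality: for finite nonempty subsets `A`, `B` of an abelian
group, `|A + A| ≤ |A + B|⁴ / (|A| · |B|²)`. -/
theorem stmt_14 {G : Type*} [AddCommGroup G] [DecidableEq G]
    (A B : Finset G) (hA : A.Nonempty) (hB : B.Nonempty) :
    (A + A).card * (A.card * B.card ^ 2) ≤ (A + B).card ^ 4 := by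
  have h1 : (A + A).card * B.card ≤ (A + B).card ^ 2 := by
    have := Finset.ruzsa_triangle_inequality_add_add_add A B A
    simpa [sq, add_comm] using this
  have h2 : A.card ≤ (A + B).card := Finset.card_le_card_add_right hB
  have h3 : B.card ≤ (A + B).card := Finset.card_le_card_add_left hA
  calc (A + A).card * (A.card * B.card ^ 2)
      = ((A + A).card * B.card) * (A.card * B.card) := by ring
    _ ≤ (A + B).card ^ 2 * ((A + B).card * (A + B).card) :=
        Nat.mul_le_mul h1 (Nat.mul_le_mul h2 h3)
    _ = (A + B).card ^ 4 := by ring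
end

section
/- For every n, k₁, k₂ with 2 ≤ k₁, k₂ ≤ n, there exists an (n, k₁, k₂, k₁+k₂+1) sumset linear injector of size m = n(k₁+k₂): a family of (k₁+k₂+1) × n matrices A_1, ..., A_m over F_2 such that for every pair of subspaces U, V ⊆ F_2^n of dimensions k₁ and k₂ respectively with dim(U ∩ V) ≤ 1, there exists i ∈ [m] with ker(A_i) ∩ (U + V) = {0}. -/
/-!
A nonzero vector is killed by a uniformly random `d × n` matrix over `𝔽_q` with probability
`q^{-d}`, so by the union bound a random matrix with `d = k + 1` rows fails to be injective on a
fixed subspace of dimension at most `k` with probability below `1/q`. Every such subspace lies in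
the span of one of the `q^{nk}` tuples of `k` vectors, and `m ≥ nk` independent matrices all fail
on a given span with probability below `q^{-m}`; the union bound over tuples leaves a good family.
Since `dim (U + V) ≤ k₁ + k₂`, this gives the theorem with `k = k₁ + k₂`.
-/

open Module Finset Submodule Matrix

theorem exists_forall_notMem_of_sum_card_lt {α β : Type*} [Fintype β]
    (s : Finset α) (B : α → Finset β) (h : ∑ a ∈ s, #(B a) < Fintype.card β) :
    ∃ b, ∀ a ∈ s, b ∉ B a := by
  classical
  obtain ⟨b, -, hb⟩ := exists_mem_notMem_of_card_lt_card (card_biUnion_le.trans_lt h)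
  exact ⟨b, fun a ha hba => hb (mem_biUnion.2 ⟨a, ha, hba⟩)⟩

theorem exists_fin_forall_exists_notMem_of_mul_card_lt {P Ω : Type*} [Fintype P] [Nonempty P]
    [Fintype Ω] (B : P → Finset Ω) (b m : ℕ) (hB : ∀ p, b * #(B p) < Fintype.card Ω)
    (hP : Fintype.card P ≤ b ^ m) (hm : m ≠ 0) :
    ∃ A : Fin m → Ω, ∀ p, ∃ i, A i ∉ B p := by
  classical
  have hsum :
      ∑ p, #(Fintype.piFinset fun _ : Fin m => B p) < Fintype.card (Fin m → Ω) := by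
    refine Nat.lt_of_mul_lt_mul_left (a := b ^ m) ?_
    calc b ^ m * ∑ p, #(Fintype.piFinset fun _ : Fin m => B p)
        = ∑ p, (b * #(B p)) ^ m := by simp [Fintype.card_piFinset, mul_sum, mul_pow]
      _ < ∑ _ : P, Fintype.card Ω ^ m :=
          sum_lt_sum_of_nonempty univ_nonempty fun p _ => Nat.pow_lt_pow_left (hB p) hm
      _ ≤ b ^ m * Fintype.card (Fin m → Ω) := by
          simp only [sum_const, card_univ, smul_eq_mul, Fintype.card_fun, Fintype.card_fin]
          exact Nat.mul_le_mul_right _ hP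
  obtain ⟨A, hA⟩ := exists_forall_notMem_of_sum_card_lt univ _ hsum
  refine ⟨A, fun p => ?_⟩
  simpa [Fintype.mem_piFinset] using hA p (mem_univ p)

theorem exists_le_span_range_of_finrank_le {K E : Type*} [DivisionRing K] [AddCommGroup E]
    [Module K E] [FiniteDimensional K E] (W : Submodule K E) {k : ℕ} (hW : finrank K W ≤ k) :
    ∃ w : Fin k → E, W ≤ span K (Set.range w) := by
  obtain ⟨f, -, hf, -⟩ := exists_fun_fin_finrank_span_eq K (W : Set E)
  have hWf : W = span K (Set.range f) := by rw [hf, span_eq]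
  rw [← span_eq W] at hW
  refine ⟨fun i => if h : (i : ℕ) < finrank K (span K (W : Set E)) then f ⟨i, h⟩ else 0,
    hWf.le.trans (span_mono ?_)⟩
  exact Set.range_subset_iff.2 fun j => ⟨Fin.castLE hW j, by simp⟩

section

open scoped Classical

variable {K ι κ : Type*} [Field K] [Fintype K] [DecidableEq K] [Fintype ι] [DecidableEq ι]
  [Fintype κ] [DecidableEq κ]

theorem card_filter_mulVec_eq_zero_mul {x : ι → K} (hx : x ≠ 0) :
    #{M : Matrix κ ι K | M *ᵥ x = 0} * Fintype.card K ^ Fintype.card κ =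
      Fintype.card K ^ (Fintype.card κ * Fintype.card ι) := by
  let L : Matrix κ ι K →ₗ[K] κ → K := LinearMap.applyₗ x ∘ₗ Matrix.toLin'.toLinearMap
  have hL : ∀ M, L M = M *ᵥ x := fun M => Matrix.toLin'_apply M x
  obtain ⟨j, hj⟩ : ∃ j, x j ≠ 0 := Function.ne_iff.mp hx
  have hsurj : Function.Surjective L := fun y =>
    ⟨vecMulVec y (Pi.single j (x j)⁻¹), by simp [hL, vecMulVec_mulVec, single_dotProduct, hj]⟩
  have hrange : finrank K (LinearMap.range L) = Fintype.card κ := by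
    rw [LinearMap.range_eq_top.2 hsurj, finrank_top, finrank_fintype_fun_eq_card]
  have hker : #{M : Matrix κ ι K | M *ᵥ x = 0} = Fintype.card (LinearMap.ker L) := by
    rw [← Fintype.card_subtype]
    exact Fintype.card_congr (Equiv.subtypeEquivRight fun M => by simp [hL])
  have hrank := L.finrank_range_add_finrank_ker
  rw [hrange, finrank_matrix, finrank_self, mul_one] at hrank
  rw [hker, card_eq_pow_finrank (K := K) (V := LinearMap.ker L), ← pow_add, ← hrank, add_comm]

theorem card_filter_exists_mulVec_eq_zero_mul_le (W : Submodule K (ι → K)) :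
    #{M : Matrix κ ι K | ∃ x : W, x ≠ 0 ∧ M *ᵥ (x : ι → K) = 0} * Fintype.card K ^ Fintype.card κ ≤
      (Fintype.card K ^ finrank K W - 1) * Fintype.card K ^ (Fintype.card κ * Fintype.card ι) := by
  have hsub : ({M : Matrix κ ι K | ∃ x : W, x ≠ 0 ∧ M *ᵥ (x : ι → K) = 0} : Finset _) ⊆
      (univ.erase (0 : W)).biUnion fun x => {M : Matrix κ ι K | M *ᵥ (x : ι → K) = 0} := by
    intro M
    simp
  calc _ ≤ (∑ x ∈ univ.erase (0 : W), #{M : Matrix κ ι K | M *ᵥ (x : ι → K) = 0}) *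
        Fintype.card K ^ Fintype.card κ :=
        Nat.mul_le_mul_right _ ((card_le_card hsub).trans card_biUnion_le)
    _ = _ := by
      rw [sum_mul, sum_congr rfl fun x hx => card_filter_mulVec_eq_zero_mul
        (by simpa using (mem_erase.1 hx).1), sum_const, smul_eq_mul,
        card_erase_of_mem (mem_univ _), card_univ, card_eq_pow_finrank (K := K) (V := W)]

theorem card_mul_card_filter_exists_mulVec_eq_zero_lt {k : ℕ} (W : Submodule K (ι → K))
    (hW : finrank K W ≤ k) :
    Fintype.card K * #{M : Matrix (Fin (k + 1)) ι K | ∃ x : W, x ≠ 0 ∧ M *ᵥ (x : ι → K) = 0} <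
      Fintype.card K ^ ((k + 1) * Fintype.card ι) := by
  have hbound := card_filter_exists_mulVec_eq_zero_mul_le (κ := Fin (k + 1)) W
  rw [Fintype.card_fin] at hbound
  set q := Fintype.card K
  have hq : 1 < q := Fintype.one_lt_card
  have hWq : q ^ finrank K W - 1 ≤ q ^ k - 1 :=
    Nat.sub_le_sub_right (Nat.pow_le_pow_right hq.le hW) 1
  have hqk : q ≤ q ^ (k + 1) := Nat.le_self_pow (by omega) q
  refine Nat.lt_of_mul_lt_mul_right (a := q ^ (k + 1)) ?_
  calc q * #{M : Matrix (Fin (k + 1)) ι K | ∃ x : W, x ≠ 0 ∧ M *ᵥ (x : ι → K) = 0} * q ^ (k + 1)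
      ≤ q * ((q ^ k - 1) * q ^ ((k + 1) * Fintype.card ι)) := by
        rw [mul_assoc]
        exact Nat.mul_le_mul_left _ (hbound.trans (Nat.mul_le_mul_right _ hWq))
    _ = (q ^ (k + 1) - q) * q ^ ((k + 1) * Fintype.card ι) := by
        rw [← mul_assoc, Nat.mul_sub, mul_one, pow_succ, mul_comm q]
    _ < q ^ (k + 1) * q ^ ((k + 1) * Fintype.card ι) :=
        Nat.mul_lt_mul_of_pos_right (by omega) (by positivity)
    _ = q ^ ((k + 1) * Fintype.card ι) * q ^ (k + 1) := mul_comm _ _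

end

theorem exists_matrix_family_injOn_of_finrank_le (K : Type*) {ι : Type*} [Field K] [Fintype K]
    [Fintype ι] (k m : ℕ) (hm : Fintype.card ι * k ≤ m) (hm0 : m ≠ 0) :
    ∃ A : Fin m → Matrix (Fin (k + 1)) ι K, ∀ W : Submodule K (ι → K), finrank K W ≤ k →
      ∃ i, ∀ x ∈ W, A i *ᵥ x = 0 → x = 0 := by
  classical
  let bad (w : Fin k → ι → K) : Finset (Matrix (Fin (k + 1)) ι K) :=
    {M | ∃ x : span K (Set.range w), x ≠ 0 ∧ M *ᵥ (x : ι → K) = 0}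
  have hbad (w : Fin k → ι → K) :
      Fintype.card K * #(bad w) < Fintype.card (Matrix (Fin (k + 1)) ι K) := by
    have hw : finrank K (span K (Set.range w)) ≤ k :=
      (finrank_range_le_card (R := K) w).trans_eq (Fintype.card_fin k)
    have hcard : Fintype.card (Matrix (Fin (k + 1)) ι K) =
        Fintype.card K ^ ((k + 1) * Fintype.card ι) := by
      rw [card_eq_pow_finrank (K := K), finrank_matrix, finrank_self, mul_one, Fintype.card_fin]
    rw [hcard]
    exact card_mul_card_filter_exists_mulVec_eq_zero_lt _ hw
  have htuples : Fintype.card (Fin k → ι → K) ≤ Fintype.card K ^ m := by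
    rw [Fintype.card_fun, Fintype.card_fun, Fintype.card_fin, ← pow_mul]
    exact Nat.pow_le_pow_right Fintype.card_pos hm
  obtain ⟨A, hA⟩ := exists_fin_forall_exists_notMem_of_mul_card_lt bad _ m hbad htuples hm0
  refine ⟨A, fun W hW => ?_⟩
  obtain ⟨w, hWw⟩ := exists_le_span_range_of_finrank_le W hW
  obtain ⟨i, hi⟩ := hA w
  refine ⟨i, fun x hx hAx => ?_⟩
  by_contra hx0
  exact hi (mem_filter.2 ⟨mem_univ _, ⟨x, hWw hx⟩, by simpa using hx0, hAx⟩)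

open Module in
theorem stmt_15_general (n k1 k2 : ℕ) (h1 : 2 ≤ k1) (h1n : k1 ≤ n) :
    ∃ A : Fin (n * (k1 + k2)) → Matrix (Fin (k1 + k2 + 1)) (Fin n) (ZMod 2),
      ∀ U V : Submodule (ZMod 2) (Fin n → ZMod 2),
        finrank (ZMod 2) U = k1 → finrank (ZMod 2) V = k2 →
        finrank (ZMod 2) ↥(U ⊓ V) ≤ 1 →
        ∃ i, ∀ x ∈ U ⊔ V, (A i).mulVec x = 0 → x = 0 := by
  obtain ⟨A, hA⟩ := exists_matrix_family_injOn_of_finrank_le (ZMod 2) (k1 + k2) (n * (k1 + k2))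
    (by rw [Fintype.card_fin]) (Nat.mul_ne_zero (by omega) (by omega))
  refine ⟨A, fun U V hU hV _ => hA (U ⊔ V) ?_⟩
  calc finrank (ZMod 2) ↥(U ⊔ V) ≤ finrank (ZMod 2) U + finrank (ZMod 2) V :=
        finrank_add_le_finrank_add_finrank U V
    _ = k1 + k2 := by rw [hU, hV]

open Module in
/-- Existence of sumset linear injectors: for all `n, k₁, k₂` with `2 ≤ k₁, k₂ ≤ n` there
is a family of `m = n(k₁+k₂)` matrices of size `(k₁+k₂+1) × n` over `F_2` such that for
every pair of subspaces `U, V ⊆ F_2^n` of dimensions `k₁`, `k₂` with `dim(U ∩ V) ≤ 1`,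
some matrix in the family has kernel intersecting `U + V` trivially. -/
theorem stmt_15 (n k1 k2 : ℕ) (h1 : 2 ≤ k1) (h1n : k1 ≤ n) (h2 : 2 ≤ k2) (h2n : k2 ≤ n) :
    ∃ A : Fin (n * (k1 + k2)) → Matrix (Fin (k1 + k2 + 1)) (Fin n) (ZMod 2),
      ∀ U V : Submodule (ZMod 2) (Fin n → ZMod 2),
        finrank (ZMod 2) U = k1 → finrank (ZMod 2) V = k2 →
        finrank (ZMod 2) ↥(U ⊓ V) ≤ 1 →
        ∃ i, ∀ x ∈ U ⊔ V, (A i).mulVec x = 0 → x = 0 :=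
  stmt_15_general n k1 k2 h1 h1n
end

section
/- There exist universal constants n₀ and c such that for every ε > 0 and n > n₀, setting k = log(n/ε²) + log log(n/ε²) + c, there exists a function F : F_2^n → F_2 such that for every affine subspace U ⊆ F_2^n of dimension k and every nonzero a ∈ F_2^n, |(1/2^k)·Σ_{x∈U} (−1)^{F(x)+F(x+a)}| ≤ ε. -/
/-!
For a uniformly random `F : G → 𝔽₂` and a finite set `T` disjoint from `T + a`, the derivative
`x ↦ F x + F (x + a)` restricted to `T` is uniformly distributed on `T → 𝔽₂`, because restriction
is a surjective group homomorphism; so by Hoeffding its `±1`-sum exceeds `ε |T|` only with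
probability `2 exp (-ε² |T| / 2)`. On a coset `U = x0 + V` take `T = U` when `a ∉ V`; when `a ∈ V`
the summands at `x` and `x + a` coincide, and `T` is the half of `U` where a functional with
`φ a = 1` vanishes. A union bound over the at most `|G| ^ (k + 2)` triples (spanning `k`-tuple of
`V`, `x0`, `a`) leaves a good `F` once `2 ^ k ≳ n k / ε²`, which the choice of `k` guarantees.
-/

open Finset Function Module Real

noncomputable def pmSign (v : ZMod 2) : ℝ := if v = 0 then 1 else -1

lemma abs_pmSign (v : ZMod 2) : |pmSign v| = 1 := by
  unfold pmSign; split_ifs <;> simp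

lemma sum_exp_mul_pmSign (c : ℝ) : ∑ v : ZMod 2, exp (c * pmSign v) = 2 * cosh c := by
  rw [cosh_eq, show (univ : Finset (ZMod 2)) = {0, 1} by decide, sum_pair (by decide)]
  simp [pmSign]
  ring

lemma sum_exp_mul_sum_pmSign (β : Type*) [Fintype β] [DecidableEq β] (c : ℝ) :
    ∑ s : β → ZMod 2, exp (c * ∑ x, pmSign (s x)) = (2 * cosh c) ^ Fintype.card β := by
  simp_rw [mul_sum, exp_sum]
  rw [← Fintype.prod_sum fun _ v => exp (c * pmSign v)]
  simp [sum_exp_mul_pmSign]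

section Hoeffding

variable {β : Type*} [Fintype β] [DecidableEq β] {ε : ℝ}

lemma card_filter_le_abs_sum_pmSign_mul_exp_le (hε : 0 ≤ ε) :
    (#{s : β → ZMod 2 | ε * Fintype.card β ≤ |∑ x, pmSign (s x)|} : ℝ) *
      exp (ε ^ 2 * Fintype.card β) ≤ 2 * (2 * cosh ε) ^ Fintype.card β := by
  set m := Fintype.card β
  set S : (β → ZMod 2) → ℝ := fun s => ∑ x, pmSign (s x)
  calc (#{s | ε * m ≤ |S s|} : ℝ) * exp (ε ^ 2 * m)
      = ∑ s with ε * m ≤ |S s|, exp (ε ^ 2 * m) := by rw [sum_const, nsmul_eq_mul]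
    _ ≤ ∑ s with ε * m ≤ |S s|, (exp (ε * S s) + exp (-ε * S s)) := by
        refine sum_le_sum fun s hs => ?_
        have h : ε ^ 2 * m ≤ ε * |S s| := by
          rw [sq, mul_assoc]; exact mul_le_mul_of_nonneg_left (mem_filter.1 hs).2 hε
        rcases abs_cases (S s) with ⟨habs, -⟩ | ⟨habs, -⟩ <;> rw [habs] at h
        · linarith [exp_le_exp.2 h, exp_pos (-ε * S s)]
        · linarith [exp_le_exp.2 (h.trans_eq (neg_mul_comm ε (S s)).symm), exp_pos (ε * S s)]
    _ ≤ ∑ s, (exp (ε * S s) + exp (-ε * S s)) :=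
        sum_le_sum_of_subset_of_nonneg (filter_subset _ _) fun _ _ _ => by positivity
    _ = 2 * (2 * cosh ε) ^ m := by
        rw [sum_add_distrib, sum_exp_mul_sum_pmSign, sum_exp_mul_sum_pmSign, cosh_neg]; ring

theorem card_filter_le_abs_sum_pmSign_le (hε : 0 ≤ ε) :
    (#{s : β → ZMod 2 | ε * Fintype.card β ≤ |∑ x, pmSign (s x)|} : ℝ) ≤
      2 ^ (Fintype.card β + 1) * exp (-(ε ^ 2 * Fintype.card β) / 2) := by
  set m := Fintype.card β
  have hcosh : (2 * cosh ε) ^ m ≤ 2 ^ m * exp (ε ^ 2 * m / 2) := by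
    rw [show ε ^ 2 * m / 2 = m * (ε ^ 2 / 2) by ring, exp_nat_mul, ← mul_pow]
    gcongr
    exact cosh_le_exp_half_sq ε
  calc (#{s : β → ZMod 2 | ε * m ≤ |∑ x, pmSign (s x)|} : ℝ)
      = #{s : β → ZMod 2 | ε * m ≤ |∑ x, pmSign (s x)|} * exp (ε ^ 2 * m) *
          exp (-(ε ^ 2 * m)) := by
        rw [mul_assoc, ← exp_add, add_neg_cancel, exp_zero, mul_one]
    _ ≤ 2 * (2 ^ m * exp (ε ^ 2 * m / 2)) * exp (-(ε ^ 2 * m)) :=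
        mul_le_mul_of_nonneg_right
          ((card_filter_le_abs_sum_pmSign_mul_exp_le hε).trans (by gcongr)) (exp_pos _).le
    _ = 2 ^ (m + 1) * exp (-(ε ^ 2 * m) / 2) := by
        rw [mul_assoc, mul_assoc, ← exp_add, pow_succ]; ring_nf

end Hoeffding

theorem AddMonoidHom.card_filter_comp_mul_card {A B : Type*} [AddGroup A] [AddGroup B]
    [Fintype A] [Fintype B] [DecidableEq B] (f : A →+ B) (hf : Surjective f) (p : B → Prop)
    [DecidablePred p] : #{x | p (f x)} * Fintype.card B = Fintype.card A * #{y | p y} := by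
  set c := #{x | f x = 0}
  have hfiber (y : B) : #{x | f x = y} = c := card_fiber_eq_of_mem_range f (hf y) (hf 0)
  have hsum (g : B → ℕ) : ∑ x, g (f x) = c * ∑ y, g y := by
    rw [← sum_fiberwise univ f, mul_sum]
    refine sum_congr rfl fun y _ => ?_
    rw [sum_congr rfl fun x hx => by rw [(mem_filter.1 hx).2], sum_const, smul_eq_mul, hfiber]
  have hA : Fintype.card A = c * Fintype.card B := by
    simpa using hsum fun _ => 1
  have hp : #{x | p (f x)} = c * #{y | p y} := by
    rw [card_filter, card_filter]; exact hsum fun y => if p y then 1 else 0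
  rw [hA, hp]; ring

section DirDeriv

variable {G : Type*} [Add G]

def dirDerivOn {M : Type*} [AddCommMonoid M] (a : G) (T : Finset G) : (G → M) →+ (T → M) where
  toFun F x := F x + F (x + a)
  map_zero' := by ext; simp
  map_add' F F' := by ext; simp [add_add_add_comm]

variable {a : G} {T : Finset G}

theorem dirDerivOn_surjective {M : Type*} [AddCommMonoid M] (hT : ∀ x ∈ T, x + a ∉ T) :
    Surjective (dirDerivOn (M := M) a T) := by
  intro s
  refine ⟨extend Subtype.val s 0, funext fun x => ?_⟩
  have hx : ¬∃ y : T, (y : G) = x + a := fun ⟨y, hy⟩ => hT x x.2 (hy ▸ y.2)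
  simp [dirDerivOn, extend_apply' _ _ _ hx]

theorem card_filter_le_abs_sum_dirDeriv_le_of_add_notMem [Fintype G] [DecidableEq G]
    (hT : ∀ x ∈ T, x + a ∉ T) {ε : ℝ} (hε : 0 ≤ ε) :
    (#{F : G → ZMod 2 | ε * #T ≤ |∑ x ∈ T, pmSign (F x + F (x + a))|} : ℝ) ≤
      2 ^ Fintype.card G * 2 * exp (-(ε ^ 2 * #T) / 2) := by
  have hsum (F : G → ZMod 2) : ∑ x ∈ T, pmSign (F x + F (x + a)) =
      ∑ x : T, pmSign (dirDerivOn a T F x) := (sum_coe_sort T _).symm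
  simp_rw [hsum]
  have hcount := congrArg (Nat.cast (R := ℝ)) <|
    (dirDerivOn (M := ZMod 2) a T).card_filter_comp_mul_card (dirDerivOn_surjective hT)
      fun s : T → ZMod 2 => ε * Fintype.card T ≤ |∑ x, pmSign (s x)|
  have hH := card_filter_le_abs_sum_pmSign_le (β := T) hε
  simp only [Fintype.card_fun, ZMod.card, Fintype.card_coe, Nat.cast_mul, Nat.cast_pow,
    Nat.cast_ofNat] at hcount hH
  refine le_of_mul_le_mul_right ?_ (by positivity : (0 : ℝ) < 2 ^ #T)
  rw [hcount]
  calc _ ≤ (2 : ℝ) ^ Fintype.card G * (2 ^ (#T + 1) * exp (-(ε ^ 2 * #T) / 2)) :=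
        mul_le_mul_of_nonneg_left hH (by positivity)
    _ = 2 ^ Fintype.card G * 2 * exp (-(ε ^ 2 * #T) / 2) * 2 ^ #T := by ring

end DirDeriv

section Coset

variable {G : Type*} [AddCommGroup G] [Module (ZMod 2) G]

lemma card_eq_two_pow_finrank_of_mem_iff [Fintype G] {V : Submodule (ZMod 2) G} {x0 : G}
    {U : Finset G} (hU : ∀ x, x ∈ U ↔ x - x0 ∈ V) : #U = 2 ^ finrank (ZMod 2) V := by
  classical
  rw [← Fintype.card_coe U, Fintype.card_congr ((Equiv.subRight x0).subtypeEquiv hU),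
    card_eq_pow_finrank (K := ZMod 2), ZMod.card]

lemma sum_eq_two_nsmul_sum_filter {M : Type*} [AddCommMonoid M] {a : G} (p : G → Prop)
    [DecidablePred p] (hp : ∀ x, p (x + a) ↔ ¬p x) {U : Finset G} (hU : ∀ x ∈ U, x + a ∈ U)
    (f : G → M) (hf : ∀ x, f (x + a) = f x) : ∑ x ∈ U, f x = 2 • ∑ x ∈ U with p x, f x := by
  have hinv (x : G) : x + a + a = x := by rw [add_assoc, ZModModule.add_self, add_zero]
  rw [← sum_filter_add_sum_filter_not U p, two_nsmul]
  congr 1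
  refine sum_nbij' (· + a) (· + a) (fun x hx => ?_) (fun x hx => ?_) (fun x _ => hinv x)
    (fun x _ => hinv x) (fun x _ => (hf x).symm)
  · rw [mem_filter] at hx ⊢
    exact ⟨hU x hx.1, (hp x).2 hx.2⟩
  · rw [mem_filter] at hx ⊢
    exact ⟨hU x hx.1, by rw [hp, not_not]; exact hx.2⟩

theorem card_filter_le_abs_sum_dirDeriv_le_of_add_mem [Fintype G] [DecidableEq G] {a : G}
    (ha : a ≠ 0) {U : Finset G} (hU : ∀ x ∈ U, x + a ∈ U) {ε : ℝ} (hε : 0 ≤ ε) :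
    (#{F : G → ZMod 2 | ε * #U ≤ |∑ x ∈ U, pmSign (F x + F (x + a))|} : ℝ) ≤
      2 ^ Fintype.card G * 2 * exp (-(ε ^ 2 * #U) / 4) := by
  obtain ⟨φ, hφ⟩ : ∃ φ : Dual (ZMod 2) G, φ a = 1 := by
    by_contra! h
    refine ha ((forall_dual_apply_eq_zero_iff (ZMod 2) a).1 fun φ => ?_)
    have hφ := h φ
    generalize φ a = v at hφ ⊢
    revert v; decide
  have hφa (x : G) : φ (x + a) = 0 ↔ ¬φ x = 0 := by
    rw [map_add, hφ]
    generalize φ x = v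
    revert v; decide
  set T := U.filter (φ · = 0)
  have hT : ∀ x ∈ T, x + a ∉ T := fun x hx hxa =>
    (hφa x).1 (mem_filter.1 hxa).2 (mem_filter.1 hx).2
  have hpair (F : G → ZMod 2) : ∑ x ∈ U, pmSign (F x + F (x + a)) =
      2 * ∑ x ∈ T, pmSign (F x + F (x + a)) := by
    rw [sum_eq_two_nsmul_sum_filter (φ · = 0) hφa hU _ fun x => ?_, nsmul_eq_mul,
      Nat.cast_ofNat]
    rw [add_assoc, ZModModule.add_self, add_zero, add_comm]
  have hcard : (#U : ℝ) = 2 * #T := by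
    rw [card_eq_sum_ones, sum_eq_two_nsmul_sum_filter (φ · = 0) hφa hU _ fun _ => rfl,
      ← card_eq_sum_ones, smul_eq_mul]
    push_cast; rfl
  have hfilter :
      univ.filter (fun F : G → ZMod 2 => ε * #U ≤ |∑ x ∈ U, pmSign (F x + F (x + a))|) =
        univ.filter fun F => ε * #T ≤ |∑ x ∈ T, pmSign (F x + F (x + a))| := by
    refine filter_congr fun F _ => ?_
    rw [hpair, hcard, abs_mul, abs_two, mul_left_comm]
    exact mul_le_mul_iff_right₀ two_pos
  rw [hfilter, hcard]
  refine (card_filter_le_abs_sum_dirDeriv_le_of_add_notMem hT hε).trans_eq ?_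
  ring_nf

theorem card_filter_le_abs_sum_coset_le [Fintype G] [DecidableEq G] {V : Submodule (ZMod 2) G}
    {x0 a : G} {U : Finset G} (hU : ∀ x, x ∈ U ↔ x - x0 ∈ V) (ha : a ≠ 0) {ε : ℝ}
    (hε : 0 ≤ ε) :
    (#{F : G → ZMod 2 | ε * #U ≤ |∑ x ∈ U, pmSign (F x + F (x + a))|} : ℝ) ≤
      2 ^ Fintype.card G * 2 * exp (-(ε ^ 2 * #U) / 4) := by
  by_cases haV : a ∈ V
  · refine card_filter_le_abs_sum_dirDeriv_le_of_add_mem ha (fun x hx => ?_) hε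
    exact (hU _).2 (by simpa [add_sub_right_comm] using V.add_mem ((hU x).1 hx) haV)
  · have hT : ∀ x ∈ U, x + a ∉ U := fun x hx hxa =>
      haV (by simpa using V.sub_mem ((hU _).1 hxa) ((hU x).1 hx))
    refine (card_filter_le_abs_sum_dirDeriv_le_of_add_notMem hT hε).trans ?_
    have : 0 ≤ ε ^ 2 * #U := by positivity
    gcongr 2 ^ Fintype.card G * 2 * exp ?_
    linarith

end Coset

lemma exists_forall_notMem_of_card_mul_lt {α ι : Type*} [Fintype α] [DecidableEq α] [Fintype ι]
    (B : ι → Finset α) {b : ℝ} (hB : ∀ i, (#(B i) : ℝ) ≤ b)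
    (h : Fintype.card ι * b < Fintype.card α) : ∃ x, ∀ i, x ∉ B i := by
  by_contra! hcover
  have hsub : univ ⊆ univ.biUnion B := fun x _ => mem_biUnion.2 (by simpa using hcover x)
  have hcard : (Fintype.card α : ℝ) ≤ ∑ i, (#(B i) : ℝ) := by
    rw [← card_univ]; exact_mod_cast (card_le_card hsub).trans card_biUnion_le
  refine h.not_ge (hcard.trans ?_)
  simpa using sum_le_sum fun i (_ : i ∈ univ) => hB i

lemma Submodule.exists_span_range_eq_of_finrank_eq {K M : Type*} [DivisionRing K]
    [AddCommGroup M] [Module K M] {V : Submodule K M} [Module.Finite K V] {k : ℕ}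
    (hV : finrank K V = k) : ∃ b : Fin k → M, span K (Set.range b) = V := by
  have : Module.Finite K (span K (V : Set M)) := by rw [span_eq]; infer_instance
  have h := exists_fun_fin_finrank_span_eq K (V : Set M)
  rw [span_eq, hV] at h
  obtain ⟨b, -, hb, -⟩ := h
  exact ⟨b, hb⟩

section Extractor

variable {G : Type*} [AddCommGroup G] [Module (ZMod 2) G] [Fintype G]

open Classical in
def IsDirAffineExtractor (k : ℕ) (ε : ℝ) (F : G → ZMod 2) : Prop :=
  ∀ (V : Submodule (ZMod 2) G) (x0 : G), finrank (ZMod 2) V = k → ∀ a : G, a ≠ 0 →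
    |(1 / 2 ^ k : ℝ) * ∑ x ∈ univ.filter (fun x => x - x0 ∈ V), pmSign (F x + F (x + a))| ≤ ε

lemma isDirAffineExtractor_of_one_le {k : ℕ} {ε : ℝ} (hε : 1 ≤ ε) (F : G → ZMod 2) :
    IsDirAffineExtractor k ε F := by
  classical
  intro V x0 hV a _
  set U := univ.filter fun x => x - x0 ∈ V
  have hU : (#U : ℝ) = 2 ^ k := by
    rw [← hV, card_eq_two_pow_finrank_of_mem_iff (V := V) (x0 := x0) (U := U) (by simp [U])]
    push_cast; rfl
  calc |(1 / 2 ^ k : ℝ) * ∑ x ∈ U, pmSign (F x + F (x + a))|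
      ≤ (1 / 2 ^ k : ℝ) * #U := by
        rw [abs_mul, abs_of_pos (by positivity)]
        gcongr
        exact (abs_sum_le_sum_abs _ _).trans_eq (by simp [abs_pmSign])
    _ = 1 := by rw [hU]; field_simp
    _ ≤ ε := hε

open Classical in
lemma card_filter_lt_abs_sum_le_of_finrank_eq [DecidableEq G] {V : Submodule (ZMod 2) G} {k : ℕ}
    (hV : finrank (ZMod 2) V = k) (x0 : G) {a : G} (ha : a ≠ 0) {ε : ℝ} (hε : 0 ≤ ε) :
    (#{F : G → ZMod 2 | ε * 2 ^ k <
        |∑ x ∈ univ.filter (fun x => x - x0 ∈ V), pmSign (F x + F (x + a))|} : ℝ) ≤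
      2 ^ Fintype.card G * 2 * exp (-(ε ^ 2 * 2 ^ k) / 4) := by
  have hU (x : G) : x ∈ univ.filter (fun x => x - x0 ∈ V) ↔ x - x0 ∈ V := by simp
  have hbound := card_filter_le_abs_sum_coset_le hU ha hε
  rw [card_eq_two_pow_finrank_of_mem_iff hU, hV] at hbound
  push_cast at hbound
  refine le_trans (Nat.cast_le.2 (card_le_card fun F hF => ?_)) hbound
  simp only [mem_filter] at hF ⊢
  exact ⟨hF.1, hF.2.le⟩

theorem exists_isDirAffineExtractor [DecidableEq G] {k : ℕ} {ε : ℝ} (hε : 0 ≤ ε)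
    (h : (Fintype.card G : ℝ) ^ (k + 2) * 2 < exp (ε ^ 2 * 2 ^ k / 4)) :
    ∃ F : G → ZMod 2, IsDirAffineExtractor k ε F := by
  classical
  -- Subspaces of dimension `k` are indexed, with repetitions, by their spanning `k`-tuples.
  let ι := {b : Fin k → G // finrank (ZMod 2) (Submodule.span (ZMod 2) (Set.range b)) = k} ×
    G × {a : G // a ≠ 0}
  let bad (i : ι) : Finset (G → ZMod 2) := univ.filter fun F => ε * 2 ^ k <
    |∑ x ∈ univ.filter (fun x => x - i.2.1 ∈ Submodule.span (ZMod 2) (Set.range i.1.1)),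
      pmSign (F x + F (x + i.2.2))|
  have hbad (i : ι) : (#(bad i) : ℝ) ≤ 2 ^ Fintype.card G * 2 * exp (-(ε ^ 2 * 2 ^ k) / 4) :=
    card_filter_lt_abs_sum_le_of_finrank_eq i.1.2 i.2.1 i.2.2.2 hε
  have hι : Fintype.card ι ≤ Fintype.card G ^ (k + 2) := by
    rw [Fintype.card_prod, Fintype.card_prod, pow_add, sq]
    gcongr
    · exact (Fintype.card_subtype_le _).trans (by simp)
    · exact Fintype.card_subtype_le _
  have hE : exp (ε ^ 2 * 2 ^ k / 4) * exp (-(ε ^ 2 * 2 ^ k) / 4) = 1 := by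
    rw [← exp_add]; ring_nf; exact exp_zero
  obtain ⟨F, hF⟩ := exists_forall_notMem_of_card_mul_lt bad hbad <|
    calc Fintype.card ι * (2 ^ Fintype.card G * 2 * exp (-(ε ^ 2 * 2 ^ k) / 4))
        ≤ Fintype.card G ^ (k + 2) * (2 ^ Fintype.card G * 2 * exp (-(ε ^ 2 * 2 ^ k) / 4)) := by
          gcongr
          exact_mod_cast hι
      _ = 2 ^ Fintype.card G * ((Fintype.card G : ℝ) ^ (k + 2) * 2) *
            exp (-(ε ^ 2 * 2 ^ k) / 4) := by ring
      _ < 2 ^ Fintype.card G * exp (ε ^ 2 * 2 ^ k / 4) * exp (-(ε ^ 2 * 2 ^ k) / 4) := by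
          gcongr
      _ = Fintype.card (G → ZMod 2) := by
          rw [mul_assoc, hE, mul_one]; simp [ZMod.card]
  refine ⟨F, fun V x0 hV a ha => ?_⟩
  obtain ⟨b, rfl⟩ := V.exists_span_range_eq_of_finrank_eq hV
  have hgood := hF (⟨b, hV⟩, x0, ⟨a, ha⟩)
  simp only [bad, mem_filter, mem_univ, true_and, not_lt] at hgood
  rw [abs_mul, abs_of_pos (by positivity), one_div, inv_mul_le_iff₀ (by positivity)]
  linarith

end Extractor

lemma logb_two_le_two_mul {x : ℝ} (hx : 0 < x) : logb 2 x ≤ 2 * x := by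
  rw [logb, div_le_iff₀ (log_pos one_lt_two)]
  nlinarith [log_le_sub_one_of_pos hx, log_two_gt_d9]

lemma mul_logb_le_two_pow_ceil {N : ℝ} (hN : 1 < N) :
    N * logb 2 N ≤ 2 ^ ⌈logb 2 N + logb 2 (logb 2 N)⌉₊ := by
  have hL : 0 < logb 2 N := logb_pos one_lt_two hN
  calc N * logb 2 N = (2 : ℝ) ^ (logb 2 N + logb 2 (logb 2 N)) := by
        rw [rpow_add two_pos, rpow_logb two_pos (by norm_num) (by linarith),
          rpow_logb two_pos (by norm_num) hL]
    _ ≤ (2 : ℝ) ^ (⌈logb 2 N + logb 2 (logb 2 N)⌉₊ : ℝ) :=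
        rpow_le_rpow_of_exponent_le one_le_two (Nat.le_ceil _)
    _ = _ := rpow_natCast _ _

lemma two_pow_pow_mul_two_lt_exp {n k : ℕ} {ε : ℝ} (hε : 0 < ε) (hε1 : ε < 1) (hn : 4 < n)
    (hk : k = ⌈logb 2 (n / ε ^ 2) + logb 2 (logb 2 (n / ε ^ 2))⌉₊ + 5) :
    ((2 : ℝ) ^ n) ^ (k + 2) * 2 < exp (ε ^ 2 * 2 ^ k / 4) := by
  set N := (n : ℝ) / ε ^ 2
  set L := logb 2 N
  have hn' : (4 : ℝ) < n := by exact_mod_cast hn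
  have hnN : (n : ℝ) ≤ N := le_div_self (by positivity) (by positivity) (by nlinarith)
  have hL : 2 < L := by
    have h4 : logb 2 (4 : ℝ) = 2 := by
      rw [show (4 : ℝ) = 2 ^ (2 : ℝ) by norm_num, logb_rpow two_pos (by norm_num)]
    exact h4 ▸ logb_lt_logb one_lt_two (by norm_num) (by linarith)
  have hk_le : (k : ℝ) ≤ 3 * L + 6 := by
    have hlogL := logb_two_le_two_mul (by linarith : 0 < L)
    have hceil := Nat.ceil_lt_add_one (show 0 ≤ L + logb 2 L from
      add_nonneg (by linarith) (logb_nonneg one_lt_two (by linarith)))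
    rw [hk]; push_cast; linarith
  have h2k : 32 * (n * L) ≤ ε ^ 2 * 2 ^ k := by
    have hNL := mul_logb_le_two_pow_ceil (by linarith : 1 < N)
    have hεN : ε ^ 2 * N = n := mul_div_cancel₀ _ (by positivity)
    rw [hk, pow_add]
    nlinarith [sq_nonneg ε]
  have hexp : (n * (k + 2) + 1 : ℝ) < 8 * (n * L) := by nlinarith
  calc ((2 : ℝ) ^ n) ^ (k + 2) * 2 = exp ((n * (k + 2) + 1) * log 2) := by
        rw [← pow_mul, ← pow_succ, ← rpow_natCast, rpow_def_of_pos two_pos]; push_cast; ring_nf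
    _ < exp (8 * (n * L)) := by
        refine exp_lt_exp.2 (lt_of_le_of_lt ?_ hexp)
        exact mul_le_of_le_one_right (by positivity) (by linarith [log_two_lt_d9])
    _ ≤ exp (ε ^ 2 * 2 ^ k / 4) := exp_le_exp.2 (by linarith)

open Module in
open scoped Classical in
/-- Existence of optimal directional affine extractors: there are universal constants
`n₀, c` such that for every `ε > 0` and `n > n₀`, with
`k = log₂(n/ε²) + log₂ log₂(n/ε²) + c`, there is `F : F_2^n → F_2` such that for every
affine subspace `U = x0 + V` of dimension `k` and every nonzero `a`,
`|2^{-k} ∑_{x ∈ U} (−1)^{F(x)+F(x+a)}| ≤ ε`. -/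
theorem stmt_16 :
    ∃ (n0 c : ℕ), ∀ ε : ℝ, 0 < ε → ∀ n : ℕ, n0 < n →
      ∀ k : ℕ,
        k = ⌈Real.logb 2 ((n : ℝ) / ε ^ 2) +
              Real.logb 2 (Real.logb 2 ((n : ℝ) / ε ^ 2))⌉₊ + c →
        ∃ F : (Fin n → ZMod 2) → ZMod 2,
          ∀ (V : Submodule (ZMod 2) (Fin n → ZMod 2)) (x0 : Fin n → ZMod 2),
            finrank (ZMod 2) V = k →
            ∀ a : Fin n → ZMod 2, a ≠ 0 →
              |(1 / 2 ^ k : ℝ) *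
                  ∑ x ∈ Finset.univ.filter (fun x : Fin n → ZMod 2 => x - x0 ∈ V),
                    (if F x + F (x + a) = 0 then (1 : ℝ) else -1)| ≤ ε := by
  refine ⟨4, 5, fun ε hε n hn k hk => ?_⟩
  rcases le_or_gt 1 ε with hε1 | hε1
  · exact ⟨0, isDirAffineExtractor_of_one_le hε1 0⟩
  · refine exists_isDirAffineExtractor hε.le ?_
    simpa [ZMod.card] using two_pow_pow_mul_two_lt_exp hε hε1 hn hk
end
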